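/- arXiv:1201.2149 — 6 statements merged into one kernel-verified Lean document; each statement's English description precedes it below -/
import Mathlib

section
/- The cardinality of D_n is (n-1)!! = (n-1)(n-3)(n-5)···, the double factorial of n-1. -/
/-!
In one-line notation, the condition of `D_{n+2}` for the outermost pair forces the largest
value to be immediately followed by the smallest one: an entry between them would have a value
strictly in between. Deleting this adjacent pair and lowering the remaining values by one gives
an element of `D_n`, since the conditions for the inner pairs only compare positions of values
that are all shifted uniformly; conversely the pair can be inserted into any of the `n + 1`
slots of an element of `D_n`. Hence `#D_{n+2} = (n + 1) #D_n`, while `D_0` and `D_1` are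
singletons.
-/

open Equiv

/-- Number of inversions of a permutation of `Fin n`. -/
def invNum {n : ℕ} (w : Perm (Fin n)) : ℕ :=
  (Finset.univ.filter (fun p : Fin n × Fin n => p.1 < p.2 ∧ w p.2 < w p.1)).card

/-- Number of excedances. -/
def excNum {n : ℕ} (w : Perm (Fin n)) : ℕ :=
  (Finset.univ.filter (fun i : Fin n => i < w i)).card

/-- Rank function on involutions: ℓ_(n)(π) = (ℓ(π)+exc(π))/2. -/
def invLen {n : ℕ} (w : Perm (Fin n)) : ℕ := (invNum w + excNum w) / 2

/-- Richardson–Springer action of the simple transposition with 0-indexed index `i`. -/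
def rsStep {n : ℕ} (i : ℕ) (π : Perm (Fin n)) : Perm (Fin n) :=
  if h : i + 1 < n then
    let a : Fin n := ⟨i, Nat.lt_of_succ_lt h⟩
    let b : Fin n := ⟨i + 1, h⟩
    if π⁻¹ b < π⁻¹ a then π
    else if π a = a ∧ π b = b then Equiv.swap a b * π
    else Equiv.swap a b * π * Equiv.swap a b
  else π

/-- Action of a word of simple transpositions. -/
def rsWord {n : ℕ} (l : List ℕ) (π : Perm (Fin n)) : Perm (Fin n) :=
  l.foldr rsStep π

/-- The adjacent transposition `s_{i+1} = (i+1, i+2)` (0-indexed `i`). -/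
def adjSwap (n : ℕ) (i : ℕ) : Perm (Fin n) :=
  if h : i + 1 < n then Equiv.swap ⟨i, Nat.lt_of_succ_lt h⟩ ⟨i + 1, h⟩ else 1

/-- `l` is a reduced word for `w`. -/
def IsReducedWord {n : ℕ} (l : List ℕ) (w : Perm (Fin n)) : Prop :=
  (∀ i ∈ l, i + 1 < n) ∧ (l.map (adjSwap n)).prod = w ∧ l.length = invNum w

/-- The "mirror" value `n+1-i` in 0-indexed terms. -/
def mir {n : ℕ} (i : Fin n) : Fin n := ⟨n - 1 - (i : ℕ), by have := i.isLt; omega⟩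

/-- The set `D_n`. -/
def Dset (n : ℕ) : Set (Perm (Fin n)) :=
  {w | ∀ i : Fin n, 2 * (i : ℕ) + 1 < n →
    w⁻¹ (mir i) < w⁻¹ i ∧
    ∀ j : Fin n, (i : ℕ) < (j : ℕ) → (j : ℕ) < n - 1 - (i : ℕ) →
      ¬(w⁻¹ (mir i) < w⁻¹ j ∧ w⁻¹ j < w⁻¹ i)}

/-- One-line notation (1-indexed values) of a permutation. -/
def oneLine {n : ℕ} (w : Perm (Fin n)) : List ℕ := List.ofFn fun k => (w k : ℕ) + 1

namespace Dset

variable {n : ℕ}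

def shiftVal (v : Fin n) : Fin (n + 2) := ⟨v + 1, by omega⟩

def skipPair (p : Fin (n + 1)) (i : Fin n) : Fin (n + 2) :=
  ⟨if (i : ℕ) < p then i else i + 2, by split_ifs <;> omega⟩

lemma shiftVal_strictMono : StrictMono (shiftVal : Fin n → Fin (n + 2)) :=
  fun a b h => Fin.mk_lt_mk.mpr (by simpa using h)

lemma skipPair_strictMono (p : Fin (n + 1)) : StrictMono (skipPair p) := by
  intro a b h
  rw [Fin.lt_def] at h ⊢
  simp only [skipPair]
  split_ifs <;> omega

lemma shiftVal_ne_zero (v : Fin n) : shiftVal v ≠ 0 := by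
  simp [shiftVal, Fin.ext_iff]

lemma shiftVal_ne_last (v : Fin n) : shiftVal v ≠ Fin.last (n + 1) := by
  simp [shiftVal, Fin.ext_iff, v.isLt.ne]

lemma skipPair_ne_castSucc (p : Fin (n + 1)) (i : Fin n) : skipPair p i ≠ p.castSucc := by
  simp only [skipPair, ne_eq, Fin.ext_iff, Fin.val_castSucc]
  split_ifs <;> omega

lemma skipPair_ne_succ (p : Fin (n + 1)) (i : Fin n) : skipPair p i ≠ p.succ := by
  simp only [skipPair, ne_eq, Fin.ext_iff, Fin.val_succ]
  split_ifs <;> omega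

lemma eq_zero_or_eq_last_or_exists_shiftVal (v : Fin (n + 2)) :
    v = 0 ∨ v = Fin.last (n + 1) ∨ ∃ v', shiftVal v' = v := by
  by_cases h0 : (v : ℕ) = 0
  · exact Or.inl (Fin.ext h0)
  by_cases hl : (v : ℕ) = n + 1
  · exact Or.inr (Or.inl (Fin.ext hl))
  exact Or.inr (Or.inr ⟨⟨v - 1, by omega⟩, Fin.ext (by simp only [shiftVal]; omega)⟩)

lemma eq_castSucc_or_eq_succ_or_exists_skipPair (p : Fin (n + 1)) (k : Fin (n + 2)) :
    k = p.castSucc ∨ k = p.succ ∨ ∃ i, skipPair p i = k := by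
  by_cases hp : (k : ℕ) = p
  · exact Or.inl (Fin.ext hp)
  by_cases hs : (k : ℕ) = p + 1
  · exact Or.inr (Or.inl (Fin.ext hs))
  refine Or.inr (Or.inr ?_)
  by_cases hk : (k : ℕ) < p
  · exact ⟨⟨k, by omega⟩, Fin.ext (by simp [skipPair, hk])⟩
  · exact ⟨⟨k - 2, by omega⟩, Fin.ext (by simp only [skipPair]; split_ifs <;> omega)⟩

lemma mir_shiftVal (i : Fin n) : mir (shiftVal i) = shiftVal (mir i) :=
  Fin.ext (by simp only [mir, shiftVal]; omega)

lemma mir_zero : mir (0 : Fin (n + 2)) = Fin.last (n + 1) :=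
  Fin.ext (by simp [mir])

/-- The one-line notation of `u` with all values raised by one and the values `n + 1`, `0`
inserted at positions `p`, `p + 1`. -/
def insertPairFun (p : Fin (n + 1)) (u : Perm (Fin n)) (k : Fin (n + 2)) : Fin (n + 2) :=
  if h : (k : ℕ) < p then shiftVal (u ⟨k, by omega⟩)
  else if h' : (k : ℕ) = p then Fin.last (n + 1)
  else if h'' : (k : ℕ) = p + 1 then 0
  else shiftVal (u ⟨k - 2, by omega⟩)

lemma insertPairFun_castSucc (p : Fin (n + 1)) (u : Perm (Fin n)) :
    insertPairFun p u p.castSucc = Fin.last (n + 1) := by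
  simp [insertPairFun]

lemma insertPairFun_succ (p : Fin (n + 1)) (u : Perm (Fin n)) :
    insertPairFun p u p.succ = 0 := by
  simp [insertPairFun]

lemma insertPairFun_skipPair (p : Fin (n + 1)) (u : Perm (Fin n)) (i : Fin n) :
    insertPairFun p u (skipPair p i) = shiftVal (u i) := by
  by_cases hi : (i : ℕ) < p
  · simp [insertPairFun, skipPair, hi]
  · have h1 : ¬(i : ℕ) + 2 = p := by omega
    have h2 : ¬(i : ℕ) + 2 = p + 1 := by omega
    have h3 : ¬(i : ℕ) + 2 < p := by omega
    simp [insertPairFun, skipPair, hi, h1, h2, h3]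

lemma insertPairFun_injective (p : Fin (n + 1)) (u : Perm (Fin n)) :
    Function.Injective (insertPairFun p u) := by
  intro k k' h
  rcases eq_castSucc_or_eq_succ_or_exists_skipPair p k with rfl | rfl | ⟨i, rfl⟩ <;>
    rcases eq_castSucc_or_eq_succ_or_exists_skipPair p k' with rfl | rfl | ⟨i', rfl⟩ <;>
    simp_all [insertPairFun_castSucc, insertPairFun_succ, insertPairFun_skipPair,
      shiftVal_strictMono.injective.eq_iff, shiftVal_ne_zero, shiftVal_ne_last,
      (shiftVal_ne_zero _).symm, (shiftVal_ne_last _).symm]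


noncomputable def insertPair (p : Fin (n + 1)) (u : Perm (Fin n)) : Perm (Fin (n + 2)) :=
  Equiv.ofBijective (insertPairFun p u)
    (Finite.injective_iff_bijective.mp (insertPairFun_injective p u))

lemma insertPair_apply_castSucc (p : Fin (n + 1)) (u : Perm (Fin n)) :
    insertPair p u p.castSucc = Fin.last (n + 1) :=
  insertPairFun_castSucc p u

lemma insertPair_apply_succ (p : Fin (n + 1)) (u : Perm (Fin n)) :
    insertPair p u p.succ = 0 :=
  insertPairFun_succ p u

lemma insertPair_inv_last (p : Fin (n + 1)) (u : Perm (Fin n)) :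
    (insertPair p u)⁻¹ (Fin.last (n + 1)) = p.castSucc :=
  Perm.inv_eq_iff_eq.mpr (insertPair_apply_castSucc p u).symm

lemma insertPair_inv_zero (p : Fin (n + 1)) (u : Perm (Fin n)) :
    (insertPair p u)⁻¹ 0 = p.succ :=
  Perm.inv_eq_iff_eq.mpr (insertPair_apply_succ p u).symm

lemma insertPair_apply_skipPair (p : Fin (n + 1)) (u : Perm (Fin n)) (i : Fin n) :
    insertPair p u (skipPair p i) = shiftVal (u i) :=
  insertPairFun_skipPair p u i

lemma insertPair_inv_shiftVal (p : Fin (n + 1)) (u : Perm (Fin n)) (v : Fin n) :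
    (insertPair p u)⁻¹ (shiftVal v) = skipPair p (u⁻¹ v) :=
  Perm.inv_eq_iff_eq.mpr <| by
    rw [insertPair_apply_skipPair]
    exact congrArg shiftVal (u.apply_symm_apply v).symm

lemma insertPair_injective :
    Function.Injective (fun x : Fin (n + 1) × Perm (Fin n) => insertPair x.1 x.2) := by
  rintro ⟨p, u⟩ ⟨q, v⟩ h
  simp only at h
  obtain rfl : p = q := Fin.castSucc_injective _ <| by
    rw [← insertPair_inv_last p u, ← insertPair_inv_last q v, h]
  refine Prod.ext rfl (Equiv.ext fun i => shiftVal_strictMono.injective ?_)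
  rw [← insertPair_apply_skipPair, ← insertPair_apply_skipPair, h]

lemma insertPair_mem_Dset_iff (p : Fin (n + 1)) (u : Perm (Fin n)) :
    insertPair p u ∈ Dset (n + 2) ↔ u ∈ Dset n := by
  have hlt_iff (a b : Fin n) :
      (insertPair p u)⁻¹ (shiftVal a) < (insertPair p u)⁻¹ (shiftVal b) ↔ u⁻¹ a < u⁻¹ b := by
    rw [insertPair_inv_shiftVal, insertPair_inv_shiftVal, (skipPair_strictMono p).lt_iff_lt]
  constructor
  · intro h i hi
    obtain ⟨hlt, hgap⟩ := h (shiftVal i) (by simp only [shiftVal]; omega)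
    rw [mir_shiftVal, hlt_iff] at hlt
    refine ⟨hlt, fun j hij hjm hbetween => hgap (shiftVal j) ?_ ?_ ?_⟩
    · simp only [shiftVal]; omega
    · simp only [shiftVal]; omega
    · rwa [mir_shiftVal, hlt_iff, hlt_iff]
  · intro h i hi
    rcases eq_zero_or_eq_last_or_exists_shiftVal i with rfl | rfl | ⟨i, rfl⟩
    · rw [mir_zero, insertPair_inv_last, insertPair_inv_zero]
      refine ⟨Fin.castSucc_lt_succ, fun j _ _ hbetween => ?_⟩
      simp only [Fin.lt_def, Fin.val_castSucc, Fin.val_succ] at hbetween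
      omega
    · simp at hi
      omega
    · obtain ⟨hlt, hgap⟩ := h i (by simp only [shiftVal] at hi; omega)
      rw [mir_shiftVal, hlt_iff]
      refine ⟨hlt, fun j hij hjm hbetween => ?_⟩
      rcases eq_zero_or_eq_last_or_exists_shiftVal j with rfl | rfl | ⟨j, rfl⟩
      · simp at hij
      · simp only [Fin.val_last] at hjm
        omega
      · rw [hlt_iff, hlt_iff] at hbetween
        simp only [shiftVal] at hij hjm
        exact hgap j (by omega) (by omega) hbetween

lemma inv_zero_eq_succ_inv_last {w : Perm (Fin (n + 2))} (hw : w ∈ Dset (n + 2)) :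
    (w⁻¹ 0 : ℕ) = w⁻¹ (Fin.last (n + 1)) + 1 := by
  obtain ⟨hlt, hgap⟩ := hw 0 (by simp)
  rw [mir_zero] at hlt hgap
  rw [Fin.lt_def] at hlt
  by_contra hne
  -- otherwise the entry right after `n + 1` has a value strictly between `0` and `n + 1`
  set k : Fin (n + 2) := ⟨w⁻¹ (Fin.last (n + 1)) + 1, by omega⟩
  have hk : w⁻¹ (w k) = k := w.symm_apply_apply k
  have hk_zero : w k ≠ 0 := fun h => hne (by rw [← h, hk])
  have hk_last : w k ≠ Fin.last (n + 1) := fun h => by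
    have : (k : ℕ) = w⁻¹ (Fin.last (n + 1)) := by rw [← h, hk]
    simp only [k] at this
    omega
  refine hgap (w k) ?_ ?_ ?_
  · simp only [Fin.val_zero]
    exact Nat.pos_of_ne_zero (Fin.val_ne_iff.mpr hk_zero)
  · have := Fin.val_ne_iff.mpr hk_last
    have := (w k).isLt
    simp only [Fin.val_last, Fin.val_zero] at *
    omega
  · rw [hk, Fin.lt_def, Fin.lt_def]
    simp only [k]
    omega

lemma exists_insertPair_eq {w : Perm (Fin (n + 2))}
    (hw : (w⁻¹ 0 : ℕ) = w⁻¹ (Fin.last (n + 1)) + 1) :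
    ∃ p u, insertPair p u = w := by
  set p : Fin (n + 1) := ⟨w⁻¹ (Fin.last (n + 1)), by omega⟩
  have hp : w p.castSucc = Fin.last (n + 1) :=
    (Perm.inv_eq_iff_eq.mp (Fin.ext rfl : w⁻¹ (Fin.last (n + 1)) = p.castSucc)).symm
  have hs : w p.succ = 0 := (Perm.inv_eq_iff_eq.mp (Fin.ext hw : w⁻¹ 0 = p.succ)).symm
  have hshift (i : Fin n) : ∃ v, shiftVal v = w (skipPair p i) := by
    rcases eq_zero_or_eq_last_or_exists_shiftVal (w (skipPair p i)) with h | h | h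
    · exact absurd (w.injective (h.trans hs.symm)) (skipPair_ne_succ p i)
    · exact absurd (w.injective (h.trans hp.symm)) (skipPair_ne_castSucc p i)
    · exact h
  choose f hf using hshift
  have hf_inj : Function.Injective f := fun i j h =>
    (skipPair_strictMono p).injective (w.injective (by rw [← hf, ← hf, h]))
  refine ⟨p, Equiv.ofBijective f (Finite.injective_iff_bijective.mp hf_inj),
    Equiv.ext fun k => ?_⟩
  rcases eq_castSucc_or_eq_succ_or_exists_skipPair p k with rfl | rfl | ⟨i, rfl⟩
  · rw [insertPair_apply_castSucc, hp]
  · rw [insertPair_apply_succ, hs]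
  · rw [insertPair_apply_skipPair, ← hf]
    rfl

lemma image_insertPair :
    (fun x : Fin (n + 1) × Perm (Fin n) => insertPair x.1 x.2) '' (Set.univ ×ˢ Dset n) =
      Dset (n + 2) := by
  ext w
  constructor
  · rintro ⟨⟨p, u⟩, ⟨-, hu⟩, rfl⟩
    exact (insertPair_mem_Dset_iff p u).mpr hu
  · intro hw
    obtain ⟨p, u, rfl⟩ := exists_insertPair_eq (inv_zero_eq_succ_inv_last hw)
    exact ⟨(p, u), ⟨trivial, (insertPair_mem_Dset_iff p u).mp hw⟩, rfl⟩

lemma ncard_add_two (n : ℕ) : (Dset (n + 2)).ncard = (n + 1) * (Dset n).ncard := by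
  rw [← image_insertPair, Set.ncard_image_of_injective _ insertPair_injective, Set.ncard_prod,
    Set.ncard_univ, Nat.card_eq_fintype_card, Fintype.card_fin]

lemma eq_univ_of_le_one (hn : n ≤ 1) : Dset n = Set.univ :=
  Set.eq_univ_of_forall fun _ i hi => absurd hi (by omega)

end Dset

/-- `#D_n = (n-1)!!`. -/
theorem card_Dset (n : ℕ) : Set.ncard (Dset n) = Nat.doubleFactorial (n - 1) := by
  induction n using Nat.twoStepInduction with
  | zero => simp [Dset.eq_univ_of_le_one]
  | one => simp [Dset.eq_univ_of_le_one]
  | more n ih _ =>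
    rw [Dset.ncard_add_two, ih]
    cases n with
    | zero => rfl
    | succ n => exact (Nat.doubleFactorial_add_two n).symm
end

section
/- For every w ∈ D_n with n ≥ 2, in the one-line notation of w, the value n appears immediately to the left of the value 1; that is, w⁻¹(1) = w⁻¹(n) + 1. -/
open Equiv

theorem covBy_apply_of_forall_not_between {α β : Type*} [Preorder β] (σ : α ≃ β) {a b : α}
    (hab : σ a < σ b) (h : ∀ j, j ≠ a → j ≠ b → ¬(σ a < σ j ∧ σ j < σ b)) : σ a ⋖ σ b := by
  refine ⟨hab, fun c hac hcb => ?_⟩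
  obtain ⟨j, rfl⟩ := σ.surjective c
  exact h j (by rintro rfl; exact hac.false) (by rintro rfl; exact hcb.false) ⟨hac, hcb⟩

/-- for `w ∈ D_n`, the value `n` appears immediately to the left of `1`. -/
theorem Dset_n_left_of_one (n : ℕ) (hn : 2 ≤ n) (w : Perm (Fin n)) (hw : w ∈ Dset n) :
    ((w⁻¹ ⟨0, by omega⟩ : Fin n) : ℕ) = ((w⁻¹ ⟨n - 1, by omega⟩ : Fin n) : ℕ) + 1 := by
  obtain ⟨hlt, hno⟩ := hw ⟨0, by omega⟩ (by simp only; omega)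
  have hcov : w⁻¹ ⟨n - 1, by omega⟩ ⋖ w⁻¹ ⟨0, by omega⟩ := by
    refine covBy_apply_of_forall_not_between w⁻¹ hlt fun j hj_last hj_zero => hno j ?_ ?_
    · exact Nat.pos_of_ne_zero fun h => hj_zero (Fin.ext h)
    · exact lt_of_le_of_ne (Nat.le_sub_one_of_lt j.isLt) fun h => hj_last (Fin.ext h)
  exact (Nat.covBy_iff_add_one_eq.mp (Fin.covBy_iff.mp hcov)).symm
end

section
/- Deleting the adjacent pair of values n,1 from the one-line notation of an element w ∈ D_n, and then decreasing each remaining entry by one, yields an element of D_{n-2}; moreover this map D_n × {positions} → D_{n-2} realizes the recursion |D_n| = (n-1)|D_{n-2}|. -/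
open Equiv

/-!
An element of `D_n` is forced by the condition for `i = 1` to contain the value `n` immediately
before the value `1`. Deleting this pair leaves a sequence order-isomorphic to a permutation `u`
of `n - 2` letters, and since positions compare in the same way before and after the deletion, the
conditions for `i ≥ 2` are exactly the defining conditions of `u ∈ D_{n-2}`. Conversely, the pair
`n,1` can be reinserted into any `u ∈ D_{n-2}` at any of the `n - 1` places, giving a bijection
`Fin (n - 1) × D_{n-2} ≃ D_n`.
-/

open Fin

theorem List.filter_finRange_eq_ofFn {k n : ℕ} {φ : Fin k → Fin n} (hφ : StrictMono φ)
    (P : Fin n → Bool) (hP : ∀ i, P i ↔ i ∈ Set.range φ) :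
    (List.finRange n).filter P = List.ofFn φ :=
  ((List.pairwise_lt_finRange n).filter P).eq_of_mem_iff hφ.sortedLT_ofFn.pairwise
    (fun i => by simp [hP])

theorem Equiv.Perm.exists_optionCongr_eq {α : Type*} [DecidableEq α] {σ : Perm (Option α)}
    (h : σ none = none) : ∃ τ : Perm α, τ.optionCongr = σ :=
  ⟨removeNone σ, by simp [h, Perm.one_def]⟩

variable {m : ℕ}

theorem mir_zero : mir (0 : Fin (m + 1)) = last m := by
  ext; simp [mir]

theorem mir_castSucc_succ (v : Fin m) : mir v.castSucc.succ = (mir v).castSucc.succ := by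
  ext; simp [mir]; omega

namespace Dset

theorem inv_zero_eq_inv_last_add_one {w : Perm (Fin (m + 2))} (hw : w ∈ Dset (m + 2)) :
    (w⁻¹ 0 : ℕ) = w⁻¹ (last (m + 1)) + 1 := by
  obtain ⟨hlt, hgap⟩ := hw 0 (by simp)
  rw [mir_zero, Fin.lt_def] at hlt
  by_contra hne
  -- the entry right after `m + 2` would be a value strictly between `1` and `m + 2`
  set x : Fin (m + 2) := ⟨w⁻¹ (last (m + 1)) + 1, by omega⟩
  have hx : w⁻¹ (w x) = x := w.symm_apply_apply x
  have hx0 : w x ≠ 0 := fun h => hne (by rw [← h, hx])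
  have hxl : w x ≠ last (m + 1) := fun h => by
    have := congrArg (fun y => (w⁻¹ y : ℕ)) h; simp only [hx, x] at this; omega
  refine hgap (w x) (Fin.pos_iff_ne_zero.2 hx0) ?_ ?_
  · have := Fin.val_lt_last hxl; simp at this ⊢; omega
  · rw [mir_zero, hx]; constructor <;> rw [Fin.lt_def] <;> simp only [x] <;> omega

theorem mem_iff_of_inv_castSucc_succ {w : Perm (Fin (m + 2))} {u : Perm (Fin m)}
    {φ : Fin m → Fin (m + 2)} (hφ : StrictMono φ)
    (hwu : ∀ v, w⁻¹ v.castSucc.succ = φ (u⁻¹ v))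
    (hadj : (w⁻¹ 0 : ℕ) = w⁻¹ (last (m + 1)) + 1) :
    w ∈ Dset (m + 2) ↔ u ∈ Dset m := by
  constructor
  · intro hw i hi
    obtain ⟨hlt, hgap⟩ := hw i.castSucc.succ (by simp; omega)
    rw [mir_castSucc_succ, hwu, hwu, hφ.lt_iff_lt] at hlt
    refine ⟨hlt, fun j hij hjm => ?_⟩
    have := hgap j.castSucc.succ (by simpa) (by simp; omega)
    rwa [mir_castSucc_succ, hwu, hwu, hwu, hφ.lt_iff_lt, hφ.lt_iff_lt] at this
  · intro hu i hi
    induction i using Fin.cases with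
    | zero =>
      rw [mir_zero, Fin.lt_def, hadj]
      exact ⟨by omega, fun j _ _ hj => by simp only [Fin.lt_def, hadj] at hj; omega⟩
    | succ k =>
      induction k using Fin.lastCases with
      | last => simp at hi; omega
      | cast i =>
        obtain ⟨hlt, hgap⟩ := hu i (by simp at hi; omega)
        rw [mir_castSucc_succ, hwu, hwu, hφ.lt_iff_lt]
        refine ⟨hlt, fun j hij hjm => ?_⟩
        induction j using Fin.cases with
        | zero => simp at hij
        | succ k =>
          induction k using Fin.lastCases with
          | last => simp at hjm; omega
          | cast j =>
            rw [hwu, hφ.lt_iff_lt, hφ.lt_iff_lt]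
            exact hgap j (by simpa using hij) (by simp at hjm; omega)

end Dset

def posEquiv (p : Fin (m + 1)) : Fin (m + 2) ≃ Option (Option (Fin m)) :=
  (finSuccEquiv' p.succ).trans (optionCongr (finSuccEquiv' p))

def valEquiv : Fin (m + 2) ≃ Option (Option (Fin m)) :=
  (finSuccEquiv (m + 1)).trans (optionCongr finSuccEquivLast)

/-- `insertPair p u` is the permutation whose one-line notation is that of `u` with every entry
raised by one and the pair `m + 2, 1` inserted at positions `p, p + 1`: `posEquiv p` sends
position `p + 1` to `none` and `p` to `some none`, while `valEquiv` sends value `0` to `none`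
and `m + 1` to `some none`. -/
def insertPair (p : Fin (m + 1)) (u : Perm (Fin m)) : Perm (Fin (m + 2)) :=
  (posEquiv p).trans (u.optionCongr.optionCongr.trans valEquiv.symm)

@[simp] theorem posEquiv_succ (p : Fin (m + 1)) : posEquiv p p.succ = none := by
  simp [posEquiv]

@[simp] theorem posEquiv_castSucc (p : Fin (m + 1)) : posEquiv p p.castSucc = some none := by
  simp [posEquiv, finSuccEquiv'_below castSucc_lt_succ]

@[simp] theorem posEquiv_succAbove_succAbove (p : Fin (m + 1)) (k : Fin m) :
    posEquiv p (p.succ.succAbove (p.succAbove k)) = some (some k) := by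
  simp [posEquiv]

@[simp] theorem posEquiv_symm_none (p : Fin (m + 1)) : (posEquiv p).symm none = p.succ :=
  (symm_apply_eq _).2 (posEquiv_succ p).symm

@[simp] theorem posEquiv_symm_some_none (p : Fin (m + 1)) :
    (posEquiv p).symm (some none) = p.castSucc :=
  (symm_apply_eq _).2 (posEquiv_castSucc p).symm

@[simp] theorem posEquiv_symm_some_some (p : Fin (m + 1)) (k : Fin m) :
    (posEquiv p).symm (some (some k)) = p.succ.succAbove (p.succAbove k) :=
  (symm_apply_eq _).2 (posEquiv_succAbove_succAbove p k).symm

@[simp] theorem valEquiv_zero : (valEquiv (0 : Fin (m + 2))) = none := by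
  simp [valEquiv]

@[simp] theorem valEquiv_last : valEquiv (last (m + 1)) = some (none : Option (Fin m)) := by
  simp [valEquiv]

@[simp] theorem valEquiv_castSucc_succ (v : Fin m) :
    valEquiv v.castSucc.succ = some (some v) := by
  simp [valEquiv]

variable (p : Fin (m + 1)) (u : Perm (Fin m))

@[simp] theorem insertPair_apply_succ : insertPair p u p.succ = 0 := by
  simp [insertPair, symm_apply_eq]

@[simp] theorem insertPair_apply_castSucc : insertPair p u p.castSucc = last (m + 1) := by
  simp [insertPair, symm_apply_eq]

@[simp] theorem insertPair_apply_succAbove_succAbove (k : Fin m) :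
    insertPair p u (p.succ.succAbove (p.succAbove k)) = (u k).castSucc.succ := by
  simp [insertPair, symm_apply_eq]

theorem insertPair_inv_castSucc_succ (v : Fin m) :
    (insertPair p u)⁻¹ v.castSucc.succ = p.succ.succAbove (p.succAbove (u⁻¹ v)) := by
  rw [Perm.inv_eq_iff_eq]; simp

theorem insertPair_inv_zero_eq_inv_last_add_one :
    ((insertPair p u)⁻¹ 0 : ℕ) = (insertPair p u)⁻¹ (last (m + 1)) + 1 := by
  rw [(Perm.inv_eq_iff_eq).2 (insertPair_apply_succ p u).symm,
    (Perm.inv_eq_iff_eq).2 (insertPair_apply_castSucc p u).symm]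
  simp

theorem insertPair_mem_Dset_iff : insertPair p u ∈ Dset (m + 2) ↔ u ∈ Dset m :=
  Dset.mem_iff_of_inv_castSucc_succ ((strictMono_succAbove _).comp (strictMono_succAbove _))
    (insertPair_inv_castSucc_succ p u) (insertPair_inv_zero_eq_inv_last_add_one p u)

theorem insertPair_injective {p q : Fin (m + 1)} {u v : Perm (Fin m)}
    (h : insertPair p u = insertPair q v) : p = q ∧ u = v := by
  have hlast := insertPair_apply_castSucc p u
  rw [h, ← insertPair_apply_castSucc q v] at hlast
  have hpq : p = q := castSucc_injective _ ((insertPair q v).injective hlast)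
  subst hpq
  refine ⟨rfl, Equiv.ext fun k => ?_⟩
  simpa using congrArg (· (p.succ.succAbove (p.succAbove k))) h

theorem exists_insertPair_eq {w : Perm (Fin (m + 2))} (hp : w p.castSucc = last (m + 1))
    (hp' : w p.succ = 0) : ∃ u, insertPair p u = w := by
  -- `σ` fixes `none` and `some none`, so it is induced by a permutation of `Fin m`
  set σ : Perm (Option (Option (Fin m))) := (posEquiv p).symm.trans (w.trans valEquiv)
  obtain ⟨τ, hτ⟩ := Perm.exists_optionCongr_eq (σ := σ) (by simp [σ, hp'])
  obtain ⟨u, hu⟩ := Perm.exists_optionCongr_eq (σ := τ) <| Option.some_injective _ <| by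
    simpa [σ, hp] using congrArg (· (some none)) hτ
  refine ⟨u, Equiv.ext fun k => ?_⟩
  simp [insertPair, hu, hτ, σ]

theorem oneLine_eq_map_filter_oneLine_insertPair :
    oneLine u =
      ((oneLine (insertPair p u)).filter (fun v => decide (v ≠ 1 ∧ v ≠ m + 2))).map (· - 1) := by
  have hrange : ∀ i, decide ((insertPair p u i : ℕ) + 1 ≠ 1 ∧ (insertPair p u i : ℕ) + 1 ≠ m + 2)
      ↔ i ∈ Set.range (p.succ.succAbove ∘ p.succAbove) := by
    intro i
    obtain ⟨o, rfl⟩ := (posEquiv p).symm.surjective i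
    rcases o with _ | _ | k
    · simp
    · simpa using fun x h => by simpa using congrArg (posEquiv p) h
    · simpa using (u k).isLt.ne
  simp only [oneLine, List.ofFn_eq_map, List.filter_map, List.map_map, Function.comp_def]
  rw [List.filter_finRange_eq_ofFn (n := m + 2)
    ((strictMono_succAbove _).comp (strictMono_succAbove _)) _ hrange, List.map_ofFn]
  simp [List.ofFn_eq_map, Function.comp_def]

theorem exists_insertPair_eq_of_mem {w : Perm (Fin (m + 2))} (hw : w ∈ Dset (m + 2)) :
    ∃ p u, insertPair p u = w := by
  have hadj := Dset.inv_zero_eq_inv_last_add_one hw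
  let p : Fin (m + 1) := ⟨w⁻¹ (last (m + 1)), by omega⟩
  have hp : w p.castSucc = last (m + 1) := by
    rw [show p.castSucc = w⁻¹ (last (m + 1)) from Fin.ext rfl]; simp
  have hp' : w p.succ = 0 := by
    rw [show p.succ = w⁻¹ 0 from Fin.ext hadj.symm]; simp
  exact ⟨p, exists_insertPair_eq p hp hp'⟩

noncomputable def insertPairEquiv : Fin (m + 1) × Dset m ≃ Dset (m + 2) :=
  Equiv.ofBijective (fun x => ⟨insertPair x.1 x.2, (insertPair_mem_Dset_iff _ _).2 x.2.2⟩) <| by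
    refine ⟨fun x y h => ?_, fun w => ?_⟩
    · obtain ⟨hp, hu⟩ := insertPair_injective (congrArg Subtype.val h)
      exact Prod.ext hp (Subtype.ext hu)
    · obtain ⟨p, u, hpu⟩ := exists_insertPair_eq_of_mem w.2
      exact ⟨(p, ⟨u, (insertPair_mem_Dset_iff p u).1 (hpu ▸ w.2)⟩), Subtype.ext hpu⟩

/-- deleting the adjacent pair `n,1` from the one-line notation of `w ∈ D_n`
and decreasing remaining entries by one yields an element of `D_{n-2}`; moreover
`|D_n| = (n-1)|D_{n-2}|`. -/
theorem Dset_deletion (n : ℕ) (hn : 2 ≤ n) :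
    (∀ w ∈ Dset n, ∃ w' ∈ Dset (n - 2),
      oneLine w' =
        ((oneLine w).filter (fun v => decide (v ≠ 1 ∧ v ≠ n))).map (· - 1)) ∧
    Set.ncard (Dset n) = (n - 1) * Set.ncard (Dset (n - 2)) := by
  obtain ⟨m, rfl⟩ : ∃ m, n = m + 2 := ⟨n - 2, by omega⟩
  rw [Nat.add_sub_cancel, show m + 2 - 1 = m + 1 by omega]
  refine ⟨fun w hw => ?_, ?_⟩
  · obtain ⟨p, u, rfl⟩ := exists_insertPair_eq_of_mem hw
    exact ⟨u, (insertPair_mem_Dset_iff p u).1 hw,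
      oneLine_eq_map_filter_oneLine_insertPair p u⟩
  · rw [← Nat.card_coe_set_eq, ← Nat.card_coe_set_eq, ← Nat.card_congr insertPairEquiv,
      Nat.card_prod, Nat.card_eq_fintype_card, Fintype.card_fin]
end

section
/- For the Richardson-Springer action on involutions: if π⁻¹(i+1) < π⁻¹(i) then ℓ_(n)(s_i · π) = ℓ_(n)(π), and if π⁻¹(i) < π⁻¹(i+1) then ℓ_(n)(s_i · π) = ℓ_(n)(π) + 1, where ℓ_(n)(π) = (ℓ(π) + exc(π))/2, ℓ is the inversion number, and exc(π) = #{i : π(i) > i}. -/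
/-!
Let `s` swap two adjacent values `a ⋖ b`. Away from the pair `{a, b}` it preserves the order, so
`s * w` has exactly the inversions of `w` plus the pair of positions of `a` and `b`, provided `a`
stands before `b` in `w`. If `a` and `b` are fixed by `π`, then `s * π` also gains the excedance
`a`. Otherwise `π a ≠ b`, so conjugating the involution `π` by `s` adds one inversion on each
side, while `s` maps the excedances of `π` bijectively onto those of `s * π * s`. Either way
`ℓ + exc` grows by `2`.
-/

open Equiv

open Finset

theorem swap_lt_swap_iff_of_covBy {α : Type*} [LinearOrder α] {a b u v : α} (hab : a ⋖ b)
    (h₁ : ¬(u = a ∧ v = b)) (h₂ : ¬(u = b ∧ v = a)) :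
    swap a b u < swap a b v ↔ u < v := by
  have below : ∀ {c}, c < b ↔ c ≤ a := covBy_iff_lt_iff_le_left.1 hab
  have above : ∀ {c}, a < c ↔ b ≤ c := covBy_iff_lt_iff_le_right.1 hab
  have := hab.lt
  rcases eq_or_ne u a with hua | hua <;> rcases eq_or_ne u b with hub | hub <;>
    rcases eq_or_ne v a with hva | hva <;> rcases eq_or_ne v b with hvb | hvb <;>
    simp_all [swap_apply_of_ne_of_ne, le_iff_lt_or_eq, eq_comm]

section Inversions

variable {n : ℕ} {a b : Fin n}

def inversions (w : Perm (Fin n)) : Finset (Fin n × Fin n) :=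
  univ.filter fun p => p.1 < p.2 ∧ w p.2 < w p.1

theorem mem_inversions {w : Perm (Fin n)} {p : Fin n × Fin n} :
    p ∈ inversions w ↔ p.1 < p.2 ∧ w p.2 < w p.1 := by
  simp [inversions]

theorem invNum_eq_card_inversions (w : Perm (Fin n)) : invNum w = #(inversions w) := rfl

theorem invNum_inv (w : Perm (Fin n)) : invNum w⁻¹ = invNum w := by
  simp only [invNum_eq_card_inversions]
  refine card_equiv ((Equiv.prodComm _ _).trans (w⁻¹.prodCongr w⁻¹)) fun ⟨p, q⟩ => ?_
  simp [mem_inversions, and_comm]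

theorem inversions_swap_mul (hab : a ⋖ b) {w : Perm (Fin n)}
    (h : w⁻¹ a < w⁻¹ b) :
    inversions (swap a b * w) = insert (w⁻¹ a, w⁻¹ b) (inversions w) := by
  ext ⟨p, q⟩
  obtain ⟨x, rfl⟩ := w⁻¹.surjective p
  obtain ⟨y, rfl⟩ := w⁻¹.surjective q
  simp only [mem_insert, mem_inversions, Prod.mk.injEq, Perm.mul_apply, Perm.coe_inv,
    apply_symm_apply, EmbeddingLike.apply_eq_iff_eq] at h ⊢
  by_cases hxy : x = a ∧ y = b
  · simp [hxy.1, hxy.2, h, hab.lt]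
  by_cases hyx : x = b ∧ y = a
  · simp [hyx.1, hyx.2, h.not_gt, hab.lt.ne']
  rw [swap_lt_swap_iff_of_covBy hab (by tauto) (by tauto)]
  tauto

theorem invNum_swap_mul (hab : a ⋖ b) {w : Perm (Fin n)} (h : w⁻¹ a < w⁻¹ b) :
    invNum (swap a b * w) = invNum w + 1 := by
  rw [invNum_eq_card_inversions, inversions_swap_mul hab h, card_insert_of_notMem]
  · rfl
  · simp [mem_inversions, hab.lt.not_gt]

theorem invNum_mul_swap (hab : a ⋖ b) {w : Perm (Fin n)} (h : w a < w b) :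
    invNum (w * swap a b) = invNum w + 1 := by
  rw [← invNum_inv, mul_inv_rev, swap_inv, invNum_swap_mul hab (by simpa using h), invNum_inv]

end Inversions

section Excedances

variable {n : ℕ} {a b : Fin n} {π : Perm (Fin n)}

def excedances (w : Perm (Fin n)) : Finset (Fin n) := univ.filter fun i => i < w i

theorem mem_excedances {w : Perm (Fin n)} {i : Fin n} : i ∈ excedances w ↔ i < w i := by
  simp [excedances]

theorem excNum_eq_card_excedances (w : Perm (Fin n)) : excNum w = #(excedances w) := rfl

theorem excedances_swap_mul_of_fixed (hab : a < b) (ha : π a = a) (hb : π b = b) :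
    excedances (swap a b * π) = insert a (excedances π) := by
  ext x
  simp only [mem_insert, mem_excedances, Perm.mul_apply]
  by_cases hxa : x = a
  · simp [hxa, ha, hab]
  by_cases hxb : x = b
  · simp [hxb, hb, hab.not_gt, hab.ne']
  rw [swap_apply_of_ne_of_ne (by rwa [← ha, π.injective.ne_iff])
    (by rwa [← hb, π.injective.ne_iff])]
  simp [hxa]

theorem excNum_swap_mul_of_fixed (hab : a < b) (ha : π a = a) (hb : π b = b) :
    excNum (swap a b * π) = excNum π + 1 := by
  rw [excNum_eq_card_excedances, excedances_swap_mul_of_fixed hab ha hb,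
    card_insert_of_notMem (by simp [mem_excedances, ha])]
  rfl

theorem excNum_swap_conj (hab : a ⋖ b) (ha : π a ≠ b) (hb : π b ≠ a) :
    excNum (swap a b * π * swap a b) = excNum π := by
  simp only [excNum_eq_card_excedances]
  refine (card_equiv (swap a b) fun x => ?_).symm
  simp only [mem_excedances, Perm.mul_apply, swap_apply_self]
  rw [swap_lt_swap_iff_of_covBy hab] <;> rintro ⟨rfl, h⟩ <;> contradiction

end Excedances

section InvLen

variable {n : ℕ} {a b : Fin n} {π : Perm (Fin n)}

theorem invLen_swap_mul_of_fixed (hab : a ⋖ b) (ha : π a = a) (hb : π b = b) :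
    invLen (swap a b * π) = invLen π + 1 := by
  have h : π⁻¹ a < π⁻¹ b := by
    rw [Perm.inv_eq_iff_eq.2 ha.symm, Perm.inv_eq_iff_eq.2 hb.symm]
    exact hab.lt
  rw [invLen, invLen, invNum_swap_mul hab h, excNum_swap_mul_of_fixed hab.lt ha hb]
  omega

theorem invLen_swap_conj (hab : a ⋖ b) (hπ : π * π = 1) (hlt : π a < π b)
    (hfix : ¬(π a = a ∧ π b = b)) :
    invLen (swap a b * π * swap a b) = invLen π + 1 := by
  have hinv : π⁻¹ = π := inv_eq_of_mul_eq_one_right hπ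
  have hππ : ∀ x, π (π x) = x := fun x => by rw [← Perm.mul_apply, hπ, Perm.one_apply]
  have hπa : π a ≠ b := by
    intro hπa
    have hπb : π b = a := by rw [← hπa, hππ]
    exact hab.lt.not_gt (by simpa [hπa, hπb] using hlt)
  have hπb : π b ≠ a := fun hπb => hπa (by rw [← hπb, hππ])
  have hlt' : (π * swap a b)⁻¹ a < (π * swap a b)⁻¹ b := by
    simpa [hinv, swap_lt_swap_iff_of_covBy hab hfix (fun h => hπa h.1)] using hlt
  rw [invLen, invLen, mul_assoc, invNum_swap_mul hab hlt', invNum_mul_swap hab hlt, ← mul_assoc,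
    excNum_swap_conj hab hπa hπb]
  omega

end InvLen

/-- effect of the Richardson–Springer action on the rank function `ℓ_(n)`. -/
theorem rsStep_invLen (n i : ℕ) (hi : i + 1 < n) (π : Perm (Fin n)) (hπ : π * π = 1) :
    (π⁻¹ ⟨i + 1, hi⟩ < π⁻¹ ⟨i, Nat.lt_of_succ_lt hi⟩ → invLen (rsStep i π) = invLen π) ∧
    (π⁻¹ ⟨i, Nat.lt_of_succ_lt hi⟩ < π⁻¹ ⟨i + 1, hi⟩ →
      invLen (rsStep i π) = invLen π + 1) := by
  set a : Fin n := ⟨i, Nat.lt_of_succ_lt hi⟩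
  set b : Fin n := ⟨i + 1, hi⟩
  have hab : a ⋖ b := by simp [a, b, Fin.covBy_iff]
  refine ⟨fun h => by rw [rsStep, dif_pos hi, if_pos h], fun h => ?_⟩
  have hstep : rsStep i π =
      if π a = a ∧ π b = b then swap a b * π else swap a b * π * swap a b := by
    rw [rsStep, dif_pos hi, if_neg h.not_gt]
  rw [hstep]
  split_ifs with hfix
  · exact invLen_swap_mul_of_fixed hab hfix.1 hfix.2
  · rw [inv_eq_of_mul_eq_one_right hπ] at h
    exact invLen_swap_conj hab hπ h hfix
end

section
/- Let 1 ≤ j < i ≤ n with i = j+1, and let v = (s_{n-1} s_{n-2} ⋯ s_{j+1})(s_1 s_2 ⋯ s_{i-1}) acting on the identity involution e via the Richardson-Springer action. Then v · e is the transposition (1,n) and ℓ_(n)(v · e) = ℓ(v). -/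
/-!
Read right to left, `v` first applies `s_{i-1}, …, s_1` to `e`: the first letter creates the
transposition `(i-1, i)`, and every later `s_m` meets a transposition `(m+1, i)` with
`m` fixed, so it acts by conjugation and yields `(m, i)`. This ends at `(1, i)`, and the letters
`s_{j+1}, …, s_{n-1}` then conjugate `(1, t)` into `(1, t+1)` until `(1, n)` is reached.
For the lengths, `(1, n)` has `2n - 3` inversions and one excedance, so `ℓ_(n)((1, n)) = n - 1`;
the inversions of `v` are the pairs ending at `i` and those starting at `j`, which overlap only
in `(j, i)`, so `ℓ(v) = (i - 1) + (n - j) - 1 = n - 1` as well.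
-/

open Equiv

section

variable {n : ℕ}

lemma val_swap_mk_apply {a b : ℕ} (ha : a < n) (hb : b < n) (x : Fin n) :
    ((swap ⟨a, ha⟩ ⟨b, hb⟩ : Perm (Fin n)) x : ℕ) =
      if (x : ℕ) = a then b else if (x : ℕ) = b then a else x := by
  rw [swap_apply_def]
  split_ifs <;> simp_all [Fin.ext_iff]

lemma adjSwap_of_lt {i : ℕ} (h : i + 1 < n) :
    adjSwap n i = swap ⟨i, by omega⟩ ⟨i + 1, h⟩ :=
  dif_pos h

lemma rsStep_one {i : ℕ} (h : i + 1 < n) :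
    rsStep i (1 : Perm (Fin n)) = swap ⟨i, by omega⟩ ⟨i + 1, h⟩ := by
  simp [rsStep, h]

lemma rsStep_of_lt_of_not_fixed {i : ℕ} (h : i + 1 < n) {π : Perm (Fin n)}
    (hlt : π⁻¹ ⟨i, by omega⟩ < π⁻¹ ⟨i + 1, h⟩)
    (hmove : ¬(π ⟨i, by omega⟩ = ⟨i, by omega⟩ ∧ π ⟨i + 1, h⟩ = ⟨i + 1, h⟩)) :
    rsStep i π = swap ⟨i, by omega⟩ ⟨i + 1, h⟩ * π * swap ⟨i, by omega⟩ ⟨i + 1, h⟩ := by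
  simp only [rsStep, dif_pos h, if_neg (not_lt.2 hlt.le), if_neg hmove]

lemma rsStep_swap_succ_left {m b : ℕ} (hmb : m + 1 < b) (hb : b < n) :
    rsStep m (swap ⟨m + 1, by omega⟩ ⟨b, hb⟩ : Perm (Fin n)) = swap ⟨m, by omega⟩ ⟨b, hb⟩ := by
  rw [rsStep_of_lt_of_not_fixed (by omega)]
  · rw [swap_comm (⟨m, by omega⟩ : Fin n), swap_comm (⟨m + 1, by omega⟩ : Fin n) ⟨b, hb⟩,
      swap_mul_swap_mul_swap (by simp; omega) (by simp; omega)]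
  · simp only [swap_inv, Fin.lt_def, val_swap_mk_apply]
    split_ifs <;> omega
  · simp only [Fin.ext_iff, val_swap_mk_apply]
    split_ifs <;> omega

lemma rsStep_swap_succ_right {a t : ℕ} (hat : a < t) (ht : t + 1 < n) :
    rsStep t (swap ⟨a, by omega⟩ ⟨t, by omega⟩ : Perm (Fin n)) =
      swap ⟨a, by omega⟩ ⟨t + 1, ht⟩ := by
  rw [rsStep_of_lt_of_not_fixed ht,
    swap_mul_swap_mul_swap (by simp; omega) (by simp; omega), swap_comm]
  · simp only [swap_inv, Fin.lt_def, val_swap_mk_apply]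
    split_ifs <;> omega
  · simp only [Fin.ext_iff, val_swap_mk_apply]
    split_ifs <;> omega

lemma rsWord_append (l₁ l₂ : List ℕ) (π : Perm (Fin n)) :
    rsWord (l₁ ++ l₂) π = rsWord l₁ (rsWord l₂ π) :=
  List.foldr_append

lemma rsWord_range'_one (m k : ℕ) (h : m + k < n) :
    rsWord (List.range' m k) (1 : Perm (Fin n)) = swap ⟨m, by omega⟩ ⟨m + k, h⟩ := by
  induction k generalizing m with
  | zero => simp [rsWord, Perm.one_def]
  | succ k ih =>
    rw [List.range'_succ]
    change rsStep m (rsWord (List.range' (m + 1) k) 1) = _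
    rcases Nat.eq_zero_or_pos k with rfl | hk
    · simpa [rsWord] using rsStep_one h
    · rw [ih (m + 1) (by omega), rsStep_swap_succ_left (by omega)]
      congr 2
      omega

lemma rsWord_reverse_range'_swap {a j : ℕ} (m : ℕ) (haj : a < j) (h : j + m < n) :
    rsWord (List.range' j m).reverse (swap ⟨a, by omega⟩ ⟨j, by omega⟩ : Perm (Fin n)) =
      swap ⟨a, by omega⟩ ⟨j + m, h⟩ := by
  induction m with
  | zero => rfl
  | succ m ih =>
    rw [List.range'_concat, one_mul, List.reverse_concat]
    change rsStep (j + m) (rsWord (List.range' j m).reverse _) = _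
    rw [ih (by omega), rsStep_swap_succ_right (by omega)]
    rfl

lemma val_prod_adjSwap_range'_apply (m k : ℕ) (h : m + k < n) (x : Fin n) :
    (((List.range' m k).map (adjSwap n)).prod x : ℕ) =
      if m ≤ (x : ℕ) ∧ (x : ℕ) < m + k then (x : ℕ) + 1
      else if (x : ℕ) = m + k then m else (x : ℕ) := by
  induction k generalizing x with
  | zero =>
    simp only [List.range'_zero, List.map_nil, List.prod_nil, Perm.one_apply]
    split_ifs <;> omega
  | succ k ih =>
    rw [List.range'_concat, one_mul, List.map_append, List.prod_append, List.map_singleton,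
      List.prod_singleton, Perm.mul_apply, ih (by omega), adjSwap_of_lt (by omega),
      val_swap_mk_apply]
    split_ifs <;> omega

lemma val_prod_adjSwap_reverse_range'_apply (j m : ℕ) (h : j + m < n) (x : Fin n) :
    (((List.range' j m).reverse.map (adjSwap n)).prod x : ℕ) =
      if (x : ℕ) = j then j + m
      else if j < (x : ℕ) ∧ (x : ℕ) ≤ j + m then (x : ℕ) - 1 else (x : ℕ) := by
  induction m with
  | zero =>
    simp only [List.range'_zero, List.reverse_nil, List.map_nil, List.prod_nil, Perm.one_apply]
    split_ifs <;> omega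
  | succ m ih =>
    rw [List.range'_concat, one_mul, List.reverse_concat, List.map_cons, List.prod_cons,
      Perm.mul_apply, adjSwap_of_lt (by omega), val_swap_mk_apply, ih (by omega)]
    split_ifs <;> omega

open Finset in
lemma invNum_eq_of_inversions_eq {w : Perm (Fin n)} {c d : Fin n} (hdc : d < c)
    (hw : ∀ p q : Fin n, p < q ∧ w q < w p ↔ (q = c ∧ p < c) ∨ (p = d ∧ d < q)) :
    invNum w = c + (n - 1 - d) - 1 := by
  have hset : univ.filter (fun p : Fin n × Fin n => p.1 < p.2 ∧ w p.2 < w p.1) =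
      Iio c ×ˢ {c} ∪ {d} ×ˢ Ioi d := by
    ext ⟨p, q⟩
    simp only [mem_filter, mem_univ, true_and, hw, mem_union, mem_product, mem_Iio,
      mem_singleton, mem_Ioi]
    tauto
  have hinter : Iio c ×ˢ {c} ∩ {d} ×ˢ Ioi d = {(d, c)} := by
    ext ⟨p, q⟩
    simp only [mem_inter, mem_product, mem_Iio, mem_singleton, mem_Ioi, Prod.mk.injEq]
    constructor
    · tauto
    · rintro ⟨rfl, rfl⟩
      exact ⟨⟨hdc, rfl⟩, rfl, hdc⟩
  have hcard := card_union_add_card_inter (Iio c ×ˢ {c}) ({d} ×ˢ Ioi d)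
  simp only [hinter, card_product, Fin.card_Iio, Fin.card_Ioi, card_singleton] at hcard
  rw [invNum, hset]
  omega

lemma invNum_swap_zero_last (hn : 2 ≤ n) :
    invNum (swap ⟨0, by omega⟩ ⟨n - 1, by omega⟩ : Perm (Fin n)) = 2 * n - 3 := by
  rw [invNum_eq_of_inversions_eq (c := ⟨n - 1, by omega⟩) (d := ⟨0, by omega⟩)]
  · simp only
    omega
  · simp only [Fin.mk_lt_mk]
    omega
  · intro p q
    simp only [Fin.lt_def, Fin.ext_iff, val_swap_mk_apply]
    split_ifs <;> omega

lemma excNum_swap_zero_last (hn : 2 ≤ n) :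
    excNum (swap ⟨0, by omega⟩ ⟨n - 1, by omega⟩ : Perm (Fin n)) = 1 := by
  rw [excNum, Finset.card_eq_one]
  refine ⟨⟨0, by omega⟩, Finset.ext fun x => ?_⟩
  simp only [Finset.mem_filter, Finset.mem_univ, true_and, Finset.mem_singleton, Fin.lt_def,
    Fin.ext_iff, val_swap_mk_apply]
  split_ifs <;> omega

lemma invNum_prod_adjSwap_reverse_range'_append_range {j : ℕ} (hj : 1 ≤ j) (hjn : j < n) :
    invNum (((List.range' j (n - 1 - j)).reverse ++ List.range j).map (adjSwap n)).prod =
      n - 1 := by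
  have hv (x : Fin n) :
      ((((List.range' j (n - 1 - j)).reverse ++ List.range j).map (adjSwap n)).prod x : ℕ) =
        if (x : ℕ) < j - 1 then (x : ℕ) + 1 else if (x : ℕ) = j - 1 then n - 1
        else if (x : ℕ) = j then 0 else (x : ℕ) - 1 := by
    rw [List.map_append, List.prod_append, Perm.mul_apply, List.range_eq_range',
      val_prod_adjSwap_reverse_range'_apply j _ (by omega),
      val_prod_adjSwap_range'_apply 0 j (by omega)]
    have := x.isLt
    split_ifs <;> omega
  rw [invNum_eq_of_inversions_eq (c := ⟨j, hjn⟩) (d := ⟨j - 1, by omega⟩)]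
  · simp only
    omega
  · simp only [Fin.mk_lt_mk]
    omega
  · intro p q
    simp only [Fin.lt_def, Fin.ext_iff, hv]
    have := p.isLt
    have := q.isLt
    split_ifs <;> omega

end

/-- for `1 ≤ j < i ≤ n` with `i = j+1` and
`v = (s_{n-1}⋯s_{j+1})(s_1⋯s_{i-1})`, one has `v · e = (1,n)` and `ℓ_(n)(v·e) = ℓ(v)`. -/
theorem rsWord_case_adjacent (n i j : ℕ) (h1 : 1 ≤ j) (h3 : i ≤ n)
    (h4 : i = j + 1) :
    rsWord ((List.range' j (n - 1 - j)).reverse ++ List.range (i - 1)) (1 : Perm (Fin n))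
      = Equiv.swap ⟨0, by omega⟩ ⟨n - 1, by omega⟩ ∧
    invLen (rsWord ((List.range' j (n - 1 - j)).reverse ++ List.range (i - 1))
        (1 : Perm (Fin n)))
      = invNum ((((List.range' j (n - 1 - j)).reverse ++ List.range (i - 1)).map
          (adjSwap n)).prod) := by
  subst h4
  rw [Nat.add_sub_cancel]
  have hv : rsWord ((List.range' j (n - 1 - j)).reverse ++ List.range j) (1 : Perm (Fin n)) =
      swap ⟨0, by omega⟩ ⟨n - 1, by omega⟩ := by
    rw [rsWord_append, List.range_eq_range', rsWord_range'_one 0 j (by omega)]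
    simp only [zero_add]
    rw [rsWord_reverse_range'_swap _ h1 (by omega)]
    congr 2
    omega
  refine ⟨hv, ?_⟩
  rw [hv, invNum_prod_adjSwap_reverse_range'_append_range h1 (by omega), invLen,
    invNum_swap_zero_last (by omega), excNum_swap_zero_last (by omega)]
  omega
end

section
/- Suppose π, π' ∈ S_n are involutions such that π(1) ≠ n but π'(1) = n. If π' = s_i · π for some adjacent transposition s_i, then i = 1 or i = n-1. -/
/-!
The action `s_i · π` is one of `π`, `s_i π`, `s_i π s_i`. Unless `i = 1` or `i = n - 1`, the
transposition `s_i` fixes both `1` and `n`, so each of these three permutations maps `1` to `n`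
exactly when `π` does.
-/

open Equiv

theorem rsStep_eq_or {n : ℕ} (i : ℕ) (π : Perm (Fin n)) :
    rsStep i π = π ∨ rsStep i π = adjSwap n i * π ∨
      rsStep i π = adjSwap n i * π * adjSwap n i := by
  simp only [rsStep, adjSwap]
  split_ifs <;> simp only [true_or, or_true]

theorem adjSwap_apply_of_ne {n i : ℕ} {x : Fin n} (hx : (x : ℕ) ≠ i) (hx' : (x : ℕ) ≠ i + 1) :
    adjSwap n i x = x := by
  unfold adjSwap
  split_ifs
  · exact swap_apply_of_ne_of_ne (Fin.ne_of_val_ne hx) (Fin.ne_of_val_ne hx')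
  · rfl

theorem rsStep_apply_eq_iff {n i : ℕ} {π : Perm (Fin n)} {a b : Fin n}
    (ha : adjSwap n i a = a) (hb : adjSwap n i b = b) :
    rsStep i π a = b ↔ π a = b := by
  have hs : ∀ x, adjSwap n i x = b ↔ x = b := fun _ => (adjSwap n i).injective.eq_iff' hb
  rcases rsStep_eq_or i π with h | h | h <;> rw [h]
  · simp only [Perm.mul_apply, hs]
  · simp only [Perm.mul_apply, ha, hs]

/-- if `π` does not contain the cycle `(1,n)` but `s_i · π` does,
then `i = 1` or `i = n-1` (0-indexed: `i = 0` or `i = n-2`). -/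
theorem rsStep_creates_1n (n i : ℕ) (hi : i + 1 < n) (π π' : Perm (Fin n))
    (h1 : π ⟨0, by omega⟩ ≠ ⟨n - 1, by omega⟩)
    (h2 : π' ⟨0, by omega⟩ = ⟨n - 1, by omega⟩)
    (hact : π' = rsStep i π) :
    i = 0 ∨ i = n - 2 := by
  by_contra! hne
  subst hact
  refine h1 ((rsStep_apply_eq_iff ?_ ?_).1 h2) <;> apply adjSwap_apply_of_ne <;> dsimp only <;> omega
end
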